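/- If a history H is conflict-opaque and legal, then its conflict graph CG(H) is acyclic. -/

import Mathlib

namespace STM

/-- Transactional events: reads (with `none` meaning the read returned abort `A`),
writes, commits and aborts, indexed by transaction ids. -/
inductive Ev (Tid Obj Val : Type) : Type where
  | read  (t : Tid) (x : Obj) (v : Option Val)
  | write (t : Tid) (x : Obj) (v : Val)
  | commit (t : Tid)
  | abort (t : Tid)

/-- A history is a finite sequence of pairwise distinct events. -/
structure History (Tid Obj Val : Type) : Type where
  evs : List (Ev Tid Obj Val)
  nodup : evs.Nodup

variable {Tid Obj Val : Type}

def Ev.tid : Ev Tid Obj Val → Tid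
  | .read t _ _ => t
  | .write t _ _ => t
  | .commit t => t
  | .abort t => t

namespace History

def Mem (H : History Tid Obj Val) (e : Ev Tid Obj Val) : Prop := e ∈ H.evs

/-- `e1 <_H e2` : e1 occurs strictly before e2 in H. -/
def Lt (H : History Tid Obj Val) (e1 e2 : Ev Tid Obj Val) : Prop :=
  ∃ i j : Fin H.evs.length, i < j ∧ H.evs.get i = e1 ∧ H.evs.get j = e2

/-- Two histories are equivalent if they have the same set of events. -/
def Equiv (H1 H2 : History Tid Obj Val) : Prop :=
  ∀ e, H1.Mem e ↔ H2.Mem e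

/-- `x` belongs to the write set of transaction `t` in `H`. -/
def Wset (H : History Tid Obj Val) (t : Tid) (x : Obj) : Prop :=
  ∃ v, H.Mem (Ev.write t x v)

/-- The set of transactions appearing in `H`. -/
def txns (H : History Tid Obj Val) : Set Tid := {t | ∃ e, H.Mem e ∧ e.tid = t}

def committed (H : History Tid Obj Val) (t : Tid) : Prop := H.Mem (Ev.commit t)

def aborted (H : History Tid Obj Val) (t : Tid) : Prop := H.Mem (Ev.abort t)

def incomplete (H : History Tid Obj Val) (t : Tid) : Prop :=
  t ∈ H.txns ∧ ¬ H.committed t ∧ ¬ H.aborted t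

/-- Event-level conflict order of `H`: w-w, w-r and r-w conflicts,
oriented by the order of events in `H`. -/
def COe (H : History Tid Obj Val) (e1 e2 : Ev Tid Obj Val) : Prop :=
  H.Lt e1 e2 ∧
  ((∃ t1 t2 x, t1 ≠ t2 ∧ e1 = Ev.commit t1 ∧ e2 = Ev.commit t2 ∧
      H.Wset t1 x ∧ H.Wset t2 x) ∨
   (∃ t1 t2 x v, t1 ≠ t2 ∧ e1 = Ev.commit t1 ∧ e2 = Ev.read t2 x (some v) ∧
      H.Wset t1 x) ∨
   (∃ t1 t2 x v, t1 ≠ t2 ∧ e1 = Ev.read t1 x (some v) ∧ e2 = Ev.commit t2 ∧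
      H.Wset t2 x))

/-- Transaction-level conflict order `T_{t1} ≺_H^CO T_{t2}`. -/
def CO (H : History Tid Obj Val) (t1 t2 : Tid) : Prop :=
  ∃ e1 e2, e1.tid = t1 ∧ e2.tid = t2 ∧ H.COe e1 e2

/-- Real-time order: `t1` completes before `t2` begins
(every event of `t1` precedes every event of `t2`). -/
def RT (H : History Tid Obj Val) (t1 t2 : Tid) : Prop :=
  t1 ∈ H.txns ∧ t2 ∈ H.txns ∧ t1 ≠ t2 ∧
  ∀ e1 e2, H.Mem e1 → H.Mem e2 → e1.tid = t1 → e2.tid = t2 → H.Lt e1 e2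

/-- A history is t-sequential if every two transactions are related
by the real-time order. -/
def TSequential (H : History Tid Obj Val) : Prop :=
  ∀ t1 t2, t1 ∈ H.txns → t2 ∈ H.txns → t1 ≠ t2 → H.RT t1 t2 ∨ H.RT t2 t1

/-- `H` is valid: every successful read reads a value written by a
transaction that committed before it. -/
def Valid (H : History Tid Obj Val) : Prop :=
  ∀ t x v, H.Mem (Ev.read t x (some v)) →
    ∃ j, H.Lt (Ev.commit j) (Ev.read t x (some v)) ∧ H.Mem (Ev.write j x v)

/-- `H` is legal: for every successful read, the transaction of its last write
(the latest commit preceding the read among transactions writing `x`)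
wrote the value `v` that was read. -/
def Legal (H : History Tid Obj Val) : Prop :=
  ∀ t x v, H.Mem (Ev.read t x (some v)) →
    ∃ i, H.Lt (Ev.commit i) (Ev.read t x (some v)) ∧ H.Wset i x ∧
      (∀ j, H.Lt (Ev.commit j) (Ev.read t x (some v)) → H.Wset j x →
        j = i ∨ H.Lt (Ev.commit j) (Ev.commit i)) ∧
      H.Mem (Ev.write i x v)

/-- `Hc` is the completion `H̄` of `H`: an abort event is inserted
immediately after the last event of every incomplete transaction. -/
def IsCompletion (H Hc : History Tid Obj Val) : Prop :=
  (∀ e, Hc.Mem e ↔ (H.Mem e ∨ ∃ t, H.incomplete t ∧ e = Ev.abort t)) ∧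
  (∀ e1 e2, H.Mem e1 → H.Mem e2 → (H.Lt e1 e2 ↔ Hc.Lt e1 e2)) ∧
  (∀ t, H.incomplete t →
    (∀ e, H.Mem e → e.tid = t → Hc.Lt e (Ev.abort t)) ∧
    (∀ e, H.Mem e → (Hc.Lt (Ev.abort t) e ↔
       ∀ e', H.Mem e' → e'.tid = t → H.Lt e' e)))

/-- Edge of the conflict graph `CG(H)`: real-time or conflict order. -/
def CGedge (H : History Tid Obj Val) (t1 t2 : Tid) : Prop :=
  H.RT t1 t2 ∨ H.CO t1 t2

/-- The conflict graph of `H` is acyclic. -/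
def CGAcyclic (H : History Tid Obj Val) : Prop :=
  ∀ t, ¬ Relation.TransGen H.CGedge t t

/-- `H` is conflict-opaque: `H` is valid and there is a t-sequential legal
history `S` equivalent to some completion `H̄` of `H` respecting
`≺_H^RT` and `≺_H^CO`. -/
def CoOpaque (H : History Tid Obj Val) : Prop :=
  H.Valid ∧ ∃ Hc S : History Tid Obj Val, H.IsCompletion Hc ∧
    S.TSequential ∧ S.Legal ∧ S.Equiv Hc ∧
    (∀ t1 t2, H.RT t1 t2 → S.RT t1 t2) ∧
    (∀ t1 t2, H.CO t1 t2 → S.CO t1 t2)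

/-- `H` is opaque: as conflict-opacity, but `S` need only respect `≺_H^RT`. -/
def Opaque (H : History Tid Obj Val) : Prop :=
  H.Valid ∧ ∃ Hc S : History Tid Obj Val, H.IsCompletion Hc ∧
    S.TSequential ∧ S.Legal ∧ S.Equiv Hc ∧
    (∀ t1 t2, H.RT t1 t2 → S.RT t1 t2)

end History
end STM

/-!
The conflict graph of a t-sequential history is acyclic: there every conflict edge is also a
real-time edge, and the real-time order of any history is a strict partial order on transactions.
A conflict-opaque `H` has a t-sequential witness `S` with `CG(H) ⊆ CG(S)`, so `CG(H)` is acyclic too.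
-/

namespace STM
namespace History

variable {Tid Obj Val : Type} {H S : History Tid Obj Val}

lemma Lt.mem_left {e₁ e₂ : Ev Tid Obj Val} (h : H.Lt e₁ e₂) : H.Mem e₁ := by
  obtain ⟨i, -, -, rfl, -⟩ := h
  exact H.evs.get_mem i

lemma Lt.mem_right {e₁ e₂ : Ev Tid Obj Val} (h : H.Lt e₁ e₂) : H.Mem e₂ := by
  obtain ⟨-, j, -, -, rfl⟩ := h
  exact H.evs.get_mem j

lemma Lt.trans {e₁ e₂ e₃ : Ev Tid Obj Val} (h₁₂ : H.Lt e₁ e₂) (h₂₃ : H.Lt e₂ e₃) :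
    H.Lt e₁ e₃ := by
  obtain ⟨i, j, hij, h₁, h₂⟩ := h₁₂
  obtain ⟨j', k, hjk, h₂', h₃⟩ := h₂₃
  have : j = j' := H.nodup.get_inj_iff.mp (h₂.trans h₂'.symm)
  exact ⟨i, k, by omega, h₁, h₃⟩

lemma Lt.asymm {e₁ e₂ : Ev Tid Obj Val} (h₁₂ : H.Lt e₁ e₂) : ¬ H.Lt e₂ e₁ := by
  rintro ⟨j', i', hji, h₂', h₁'⟩
  obtain ⟨i, j, hij, h₁, h₂⟩ := h₁₂
  have : i = i' := H.nodup.get_inj_iff.mp (h₁.trans h₁'.symm)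
  have : j = j' := H.nodup.get_inj_iff.mp (h₂.trans h₂'.symm)
  omega

lemma RT.trans {t₁ t₂ t₃ : Tid} (h₁₂ : H.RT t₁ t₂) (h₂₃ : H.RT t₂ t₃) : H.RT t₁ t₃ := by
  obtain ⟨ht₁, ⟨e₂, he₂, rfl⟩, -, hlt₁₂⟩ := h₁₂
  obtain ⟨-, ht₃, -, hlt₂₃⟩ := h₂₃
  refine ⟨ht₁, ht₃, ?_, fun e₁ e₃ he₁ he₃ h₁ h₃ =>
    (hlt₁₂ e₁ e₂ he₁ he₂ h₁ rfl).trans (hlt₂₃ e₂ e₃ he₂ he₃ rfl h₃)⟩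
  rintro rfl
  obtain ⟨e₁, he₁, h₁⟩ := ht₁
  exact (hlt₁₂ e₁ e₂ he₁ he₂ h₁ rfl).asymm (hlt₂₃ e₂ e₁ he₂ he₁ rfl h₁)

instance RT.isTrans (H : History Tid Obj Val) : IsTrans Tid H.RT :=
  ⟨fun _ _ _ => RT.trans⟩

lemma COe.tid_ne {e₁ e₂ : Ev Tid Obj Val} (h : H.COe e₁ e₂) : e₁.tid ≠ e₂.tid := by
  obtain ⟨-, ⟨_, _, _, hne, rfl, rfl, -⟩ | ⟨_, _, _, _, hne, rfl, rfl, -⟩ |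
    ⟨_, _, _, _, hne, rfl, rfl, -⟩⟩ := h <;> exact hne

lemma TSequential.rt_of_co (hS : S.TSequential) {t₁ t₂ : Tid} (h : S.CO t₁ t₂) :
    S.RT t₁ t₂ := by
  obtain ⟨e₁, e₂, rfl, rfl, hco⟩ := h
  have he₁ : S.Mem e₁ := hco.1.mem_left
  have he₂ : S.Mem e₂ := hco.1.mem_right
  refine (hS _ _ ⟨e₁, he₁, rfl⟩ ⟨e₂, he₂, rfl⟩ hco.tid_ne).resolve_right fun hrt => ?_
  exact hco.1.asymm (hrt.2.2.2 e₂ e₁ he₂ he₁ rfl rfl)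

lemma TSequential.cgAcyclic (hS : S.TSequential) : S.CGAcyclic := by
  intro t ht
  have hrt : S.RT t t :=
    Relation.transGen_minimal (r := S.CGedge) (fun _ _ h => h.elim id hS.rt_of_co) t t ht
  exact hrt.2.2.1 rfl

lemma CGAcyclic.mono (hS : S.CGAcyclic) (hHS : ∀ t₁ t₂, H.CGedge t₁ t₂ → S.CGedge t₁ t₂) :
    H.CGAcyclic :=
  fun t ht => hS t (Relation.TransGen.mono hHS t t ht)

end History
end STM

open STM History in
theorem cgAcyclic_of_coOpaque_general {Tid Obj Val : Type}
    (H : STM.History Tid Obj Val)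
    (hop : H.CoOpaque) :
    H.CGAcyclic := by
  obtain ⟨-, -, S, -, hseq, -, -, hrt, hco⟩ := hop
  exact hseq.cgAcyclic.mono fun t₁ t₂ h => h.imp (hrt t₁ t₂) (hco t₁ t₂)

open STM History in
/-- If a history is conflict-opaque and legal, then its conflict graph is acyclic. -/
theorem cgAcyclic_of_coOpaque {Tid Obj Val : Type}
    (H : STM.History Tid Obj Val)
    (hop : H.CoOpaque) (hleg : H.Legal) :
    H.CGAcyclic :=
  cgAcyclic_of_coOpaque_general H hop
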